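/- arXiv:2310.19483 — 6 statements merged into one kernel-verified Lean document; each statement's English description precedes it below -/
import Mathlib

section
/- Let n ≥ 1 be an integer, a < b real numbers, and f : [a,b] → ℝ twice continuously differentiable with m₂ ≤ f''(x) ≤ M₂ for all x ∈ [a,b]. Define the remainder ε by f(b) = f(a) + (b-a)·[ (f'(a)+f'(b))/(2n) + (1/n)·Σ_{k=1}^{n-1} f'(a + k(b-a)/n) ] + (b-a)·ε. Then |ε| ≤ (b-a)(M₂ - m₂)/(8n). -/
/-!
On one cell `[x, y]` with midpoint `c` and half-length `h`, compare the trapezoidal rule with `f`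
through `Φ u = f (c + u) - f (c - u) - u (f' (c - u) + f' (c + u))`: `Φ 0 = 0`, `Φ h` is the
trapezoid error, and `Φ' u = u (f'' (c - u) - f'' (c + u))` has modulus at most `(M₂ - m₂) u`, so
`|Φ h| ≤ (M₂ - m₂) h² / 2 = (M₂ - m₂)(y - x)² / 8`. Summing over the `n` cells of length
`(b - a) / n` gives the bound.
-/

open Set

lemma Finset.sum_range_add_succ_div_two {K : Type*} [Field K] [CharZero K] (u : ℕ → K)
    {n : ℕ} (hn : 1 ≤ n) :
    ∑ k ∈ Finset.range n, (u k + u (k + 1)) / 2 = (u 0 + u n) / 2 + ∑ k ∈ Finset.Ico 1 n, u k := by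
  induction n, hn using Nat.le_induction with
  | base => simp
  | succ n hn ih =>
    rw [Finset.sum_range_succ, ih, Finset.sum_Ico_succ_top hn]
    ring

lemma sub_le_sub_of_hasDerivAt_le {φ φ' B B' : ℝ → ℝ} {a b : ℝ} (hab : a ≤ b)
    (hφ : ContinuousOn φ (Icc a b)) (hB : ContinuousOn B (Icc a b))
    (hφ' : ∀ t ∈ Ioo a b, HasDerivAt φ (φ' t) t) (hB' : ∀ t ∈ Ioo a b, HasDerivAt B (B' t) t)
    (hle : ∀ t ∈ Ioo a b, φ' t ≤ B' t) :
    φ b - φ a ≤ B b - B a := by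
  have hmono : MonotoneOn (fun t => B t - φ t) (Icc a b) := by
    refine monotoneOn_of_hasDerivWithinAt_nonneg (f' := fun t => B' t - φ' t) (convex_Icc a b)
      (hB.sub hφ) ?_ ?_
    · rw [interior_Icc]
      exact fun t ht => ((hB' t ht).sub (hφ' t ht)).hasDerivWithinAt
    · rw [interior_Icc]
      exact fun t ht => sub_nonneg.2 (hle t ht)
  have := hmono (left_mem_Icc.2 hab) (right_mem_Icc.2 hab) hab
  linarith

lemma abs_sub_le_sub_of_hasDerivAt_abs_le {φ φ' B B' : ℝ → ℝ} {a b : ℝ} (hab : a ≤ b)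
    (hφ : ContinuousOn φ (Icc a b)) (hB : ContinuousOn B (Icc a b))
    (hφ' : ∀ t ∈ Ioo a b, HasDerivAt φ (φ' t) t) (hB' : ∀ t ∈ Ioo a b, HasDerivAt B (B' t) t)
    (hle : ∀ t ∈ Ioo a b, |φ' t| ≤ B' t) :
    |φ b - φ a| ≤ B b - B a := by
  rw [abs_le]
  constructor
  · have := sub_le_sub_of_hasDerivAt_le hab hφ.neg hB (fun t ht => (hφ' t ht).neg) hB'
      fun t ht => (neg_le_abs _).trans (hle t ht)
    simp only [Pi.neg_apply] at this
    linarith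
  · exact sub_le_sub_of_hasDerivAt_le hab hφ hB hφ' hB' fun t ht => (le_abs_self _).trans (hle t ht)

theorem abs_trapezoid_error_le {f f' f'' : ℝ → ℝ} {x y m M : ℝ} (hxy : x ≤ y)
    (hf : ContinuousOn f (Icc x y)) (hf'c : ContinuousOn f' (Icc x y))
    (hf' : ∀ t ∈ Ioo x y, HasDerivAt f (f' t) t) (hf'' : ∀ t ∈ Ioo x y, HasDerivAt f' (f'' t) t)
    (hm : ∀ t ∈ Ioo x y, m ≤ f'' t) (hM : ∀ t ∈ Ioo x y, f'' t ≤ M) :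
    |f y - f x - (y - x) * (f' x + f' y) / 2| ≤ (M - m) * (y - x) ^ 2 / 8 := by
  set c := (x + y) / 2 with hc
  set h := (y - x) / 2 with hh
  have hmaps : MapsTo (c + ·) (Icc 0 h) (Icc x y) ∧ MapsTo (c - ·) (Icc 0 h) (Icc x y) := by
    constructor <;> intro u hu <;> constructor <;> linarith [hu.1, hu.2]
  have hmaps' : MapsTo (c + ·) (Ioo 0 h) (Ioo x y) ∧ MapsTo (c - ·) (Ioo 0 h) (Ioo x y) := by
    constructor <;> intro u hu <;> constructor <;> linarith [hu.1, hu.2]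
  have hcont : ContinuousOn (fun u => f (c + u) - f (c - u) - u * (f' (c - u) + f' (c + u)))
      (Icc 0 h) := by
    have hp : ContinuousOn (c + ·) (Icc 0 h) := by fun_prop
    have hs : ContinuousOn (c - ·) (Icc 0 h) := by fun_prop
    exact ((hf.comp hp hmaps.1).sub (hf.comp hs hmaps.2)).sub
      (continuousOn_id.mul ((hf'c.comp hs hmaps.2).add (hf'c.comp hp hmaps.1)))
  have hderiv : ∀ u ∈ Ioo 0 h, HasDerivAt
      (fun u => f (c + u) - f (c - u) - u * (f' (c - u) + f' (c + u)))
      (u * (f'' (c - u) - f'' (c + u))) u := by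
    intro u hu
    have := (((hf' _ (hmaps'.1 hu)).comp_const_add c u).sub
      ((hf' _ (hmaps'.2 hu)).comp_const_sub c u)).sub ((hasDerivAt_id u).mul
        (((hf'' _ (hmaps'.2 hu)).comp_const_sub c u).add ((hf'' _ (hmaps'.1 hu)).comp_const_add c u)))
    refine this.congr_deriv ?_
    simp only [id, Pi.add_apply]
    ring
  have hbound : ∀ u ∈ Ioo 0 h, |u * (f'' (c - u) - f'' (c + u))| ≤ (M - m) * u := by
    intro u hu
    rw [abs_mul, abs_of_pos hu.1, mul_comm]
    refine mul_le_mul_of_nonneg_right (abs_sub_le_iff.2 ⟨?_, ?_⟩) hu.1.le <;>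
      linarith [hm _ (hmaps'.1 hu), hM _ (hmaps'.1 hu), hm _ (hmaps'.2 hu), hM _ (hmaps'.2 hu)]
  have key := abs_sub_le_sub_of_hasDerivAt_abs_le (by linarith) hcont
    (by fun_prop : ContinuousOn (fun u => (M - m) * u ^ 2 / 2) (Icc 0 h)) hderiv
    (fun u _ => (((hasDerivAt_pow 2 u).const_mul (M - m)).div_const 2).congr_deriv (by ring)) hbound
  have hy : c + h = y := by rw [hc, hh]; ring
  have hx : c - h = x := by rw [hc, hh]; ring
  simp only [hy, hx, add_zero, sub_zero, sub_self, zero_mul] at key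
  convert key using 2 <;> rw [hh] <;> ring

theorem abs_composite_trapezoid_error_le {f f' f'' : ℝ → ℝ} {a b m M : ℝ} {n : ℕ}
    (hn : 1 ≤ n) (hab : a ≤ b)
    (hf : ContinuousOn f (Icc a b)) (hf'c : ContinuousOn f' (Icc a b))
    (hf' : ∀ t ∈ Ioo a b, HasDerivAt f (f' t) t) (hf'' : ∀ t ∈ Ioo a b, HasDerivAt f' (f'' t) t)
    (hm : ∀ t ∈ Ioo a b, m ≤ f'' t) (hM : ∀ t ∈ Ioo a b, f'' t ≤ M) :
    |f b - f a - (b - a) / n * ((f' a + f' b) / 2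
        + ∑ k ∈ Finset.Ico 1 n, f' (a + k * (b - a) / n))|
      ≤ (M - m) * (b - a) ^ 2 / (8 * n) := by
  set p : ℕ → ℝ := fun k => a + k * (b - a) / n with hp
  have hn₀ : (n : ℝ) ≠ 0 := by positivity
  have hstep : ∀ k, p (k + 1) - p k = (b - a) / n := fun k => by
    simp only [hp]; push_cast; ring
  have hp₀ : p 0 = a := by simp [hp]
  have hpn : p n = b := by simp only [hp]; field_simp; ring
  have hmono : Monotone p := monotone_nat_of_le_succ fun k => by
    have := hstep k
    have : 0 ≤ (b - a) / n := div_nonneg (sub_nonneg.2 hab) n.cast_nonneg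
    linarith
  have hsub : ∀ k < n, Icc (p k) (p (k + 1)) ⊆ Icc a b := fun k hk => by
    rw [← hp₀, ← hpn]; exact Icc_subset_Icc (hmono k.zero_le) (hmono hk)
  have hsub' : ∀ k < n, Ioo (p k) (p (k + 1)) ⊆ Ioo a b := fun k hk => by
    rw [← hp₀, ← hpn]; exact Ioo_subset_Ioo (hmono k.zero_le) (hmono hk)
  have hsplit : f b - f a - (b - a) / n * ((f' a + f' b) / 2 + ∑ k ∈ Finset.Ico 1 n, f' (p k))
      = ∑ k ∈ Finset.range n,
          (f (p (k + 1)) - f (p k) - (p (k + 1) - p k) * (f' (p k) + f' (p (k + 1))) / 2) := by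
    have htelescope : ∑ k ∈ Finset.range n, (f (p (k + 1)) - f (p k)) = f b - f a := by
      rw [Finset.sum_range_sub (fun k => f (p k)), hp₀, hpn]
    have htrapezoid : ∑ k ∈ Finset.range n, (p (k + 1) - p k) * (f' (p k) + f' (p (k + 1))) / 2
        = (b - a) / n * ((f' a + f' b) / 2 + ∑ k ∈ Finset.Ico 1 n, f' (p k)) := by
      simp_rw [hstep, mul_div_assoc]
      rw [← Finset.mul_sum, Finset.sum_range_add_succ_div_two (fun k => f' (p k)) hn, hp₀, hpn]
    rw [Finset.sum_sub_distrib, htelescope, htrapezoid]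
  calc _ = |∑ k ∈ Finset.range n,
          (f (p (k + 1)) - f (p k) - (p (k + 1) - p k) * (f' (p k) + f' (p (k + 1))) / 2)| := by
        rw [← hsplit]
    _ ≤ ∑ k ∈ Finset.range n, (M - m) * (p (k + 1) - p k) ^ 2 / 8 := by
        refine (Finset.abs_sum_le_sum_abs _ _).trans (Finset.sum_le_sum fun k hk => ?_)
        have hk := Finset.mem_range.1 hk
        exact abs_trapezoid_error_le (hmono k.le_succ) (hf.mono (hsub k hk))
          (hf'c.mono (hsub k hk)) (fun t ht => hf' t (hsub' k hk ht))
          (fun t ht => hf'' t (hsub' k hk ht)) (fun t ht => hm t (hsub' k hk ht))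
          (fun t ht => hM t (hsub' k hk ht))
    _ = (M - m) * (b - a) ^ 2 / (8 * n) := by
        simp only [hstep, Finset.sum_const, Finset.card_range, nsmul_eq_mul]
        field_simp

theorem taylor_like_first_order_general
    (n : ℕ) (hn : 1 ≤ n) (a b : ℝ) (hab : a < b)
    (f f' f'' : ℝ → ℝ) (m2 M2 ε : ℝ)
    (hf' : ∀ x ∈ Icc a b, HasDerivWithinAt f (f' x) (Icc a b) x)
    (hf'' : ∀ x ∈ Icc a b, HasDerivWithinAt f' (f'' x) (Icc a b) x)
    (hm2 : ∀ x ∈ Icc a b, m2 ≤ f'' x)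
    (hM2 : ∀ x ∈ Icc a b, f'' x ≤ M2)
    (hε : f b = f a
        + (b - a) * ((f' a + f' b) / (2 * n)
            + (1 / n) * ∑ k ∈ Finset.Ico 1 n, f' (a + k * (b - a) / n))
        + (b - a) * ε) :
    |ε| ≤ (b - a) * (M2 - m2) / (8 * n) := by
  have hba : 0 < b - a := sub_pos.2 hab
  have hbound := abs_composite_trapezoid_error_le hn hab.le
    (fun x hx => (hf' x hx).continuousWithinAt) (fun x hx => (hf'' x hx).continuousWithinAt)
    (fun x hx => (hf' x (Ioo_subset_Icc_self hx)).hasDerivAt (Icc_mem_nhds hx.1 hx.2))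
    (fun x hx => (hf'' x (Ioo_subset_Icc_self hx)).hasDerivAt (Icc_mem_nhds hx.1 hx.2))
    (fun x hx => hm2 x (Ioo_subset_Icc_self hx)) (fun x hx => hM2 x (Ioo_subset_Icc_self hx))
  have hremainder : f b - f a - (b - a) / n * ((f' a + f' b) / 2
      + ∑ k ∈ Finset.Ico 1 n, f' (a + k * (b - a) / n)) = (b - a) * ε := by
    rw [hε]; ring
  rw [hremainder, abs_mul, abs_of_pos hba,
    show (M2 - m2) * (b - a) ^ 2 / (8 * n) = (b - a) * ((b - a) * (M2 - m2) / (8 * n)) by ring]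
    at hbound
  exact le_of_mul_le_mul_left hbound hba

/-- First-order Taylor-like formula with `n` equally spaced points:
if `f ∈ C²([a,b])` with `m₂ ≤ f'' ≤ M₂` on `[a,b]`, and `ε` is the remainder defined by
`f(b) = f(a) + (b-a)·[(f'(a)+f'(b))/(2n) + (1/n)·Σ_{k=1}^{n-1} f'(a + k(b-a)/n)] + (b-a)·ε`,
then `|ε| ≤ (b-a)(M₂-m₂)/(8n)`. -/
theorem taylor_like_first_order
    (n : ℕ) (hn : 1 ≤ n) (a b : ℝ) (hab : a < b)
    (f f' f'' : ℝ → ℝ) (m2 M2 ε : ℝ)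
    (hf' : ∀ x ∈ Icc a b, HasDerivWithinAt f (f' x) (Icc a b) x)
    (hf'' : ∀ x ∈ Icc a b, HasDerivWithinAt f' (f'' x) (Icc a b) x)
    (hf''cont : ContinuousOn f'' (Icc a b))
    (hm2 : ∀ x ∈ Icc a b, m2 ≤ f'' x)
    (hM2 : ∀ x ∈ Icc a b, f'' x ≤ M2)
    (hε : f b = f a
        + (b - a) * ((f' a + f' b) / (2 * n)
            + (1 / n) * ∑ k ∈ Finset.Ico 1 n, f' (a + k * (b - a) / n))
        + (b - a) * ε) :
    |ε| ≤ (b - a) * (M2 - m2) / (8 * n) :=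
  taylor_like_first_order_general n hn a b hab f f' f'' m2 M2 ε hf' hf'' hm2 hM2 hε
end

section
/- Let a < b be real numbers and f : [a,b] → ℝ twice continuously differentiable with m₂ ≤ f''(x) ≤ M₂ for all x ∈ [a,b]. Define the remainder ε by f(b) = f(a) + (b-a)·(f'(a)+f'(b))/2 + (b-a)·ε. Then (b-a)(m₂-M₂)/8 ≤ ε ≤ (b-a)(M₂-m₂)/8. -/
/-!
Split `[a, b]` at its midpoint `c` and write `h = (b - a) / 2`. Since `f - m₂ x² / 2` has a monotone
derivative, its tangent line at either endpoint of a subinterval lies below it, which bounds the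
Taylor remainders `f c - f a - h f'(a)` and `f c - f b + h f'(b)` below by `m₂ h² / 2`; applied to
`M₂ x² / 2 - f` the same argument bounds them above by `M₂ h² / 2`. The difference of the two
remainders is `(b - a) ε`, and `h² / 2 = (b - a)² / 8`.
-/

open Set

section Icc

variable {u v : ℝ}

theorem monotoneOn_Icc_of_hasDerivWithinAt_nonneg {φ φ' : ℝ → ℝ}
    (hφ : ∀ x ∈ Icc u v, HasDerivWithinAt φ (φ' x) (Icc u v) x)
    (hφ' : ∀ x ∈ Ioo u v, 0 ≤ φ' x) : MonotoneOn φ (Icc u v) :=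
  monotoneOn_of_hasDerivWithinAt_nonneg (convex_Icc u v)
    (fun x hx => (hφ x hx).continuousWithinAt)
    (fun x hx => (hφ x (interior_subset hx)).mono interior_subset)
    (fun x hx => hφ' x (by rwa [interior_Icc] at hx))

section Convex

variable {g g' : ℝ → ℝ} (huv : u ≤ v)
  (hg : ∀ x ∈ Icc u v, HasDerivWithinAt g (g' x) (Icc u v) x) (hg' : MonotoneOn g' (Icc u v))
include huv hg hg'

theorem add_mul_deriv_le_of_monotoneOn_left : g u + (v - u) * g' u ≤ g v := by
  have hφ : ∀ x ∈ Icc u v,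
      HasDerivWithinAt (fun x => g x - (x - u) * g' u) (g' x - g' u) (Icc u v) x := fun x hx =>
    ((hg x hx).fun_sub (((hasDerivWithinAt_id x _).sub_const u).mul_const (g' u))).congr_deriv
      (by ring)
  have hmono := monotoneOn_Icc_of_hasDerivWithinAt_nonneg hφ fun x hx =>
    sub_nonneg.2 (hg' (left_mem_Icc.2 huv) (Ioo_subset_Icc_self hx) hx.1.le)
  have := hmono (left_mem_Icc.2 huv) (right_mem_Icc.2 huv) huv
  linarith

theorem add_mul_deriv_le_of_monotoneOn_right : g v + (u - v) * g' v ≤ g u := by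
  have hφ : ∀ x ∈ Icc u v,
      HasDerivWithinAt (fun x => (x - v) * g' v - g x) (g' v - g' x) (Icc u v) x := fun x hx =>
    ((((hasDerivWithinAt_id x _).sub_const v).mul_const (g' v)).fun_sub (hg x hx)).congr_deriv
      (by ring)
  have hmono := monotoneOn_Icc_of_hasDerivWithinAt_nonneg hφ fun x hx =>
    sub_nonneg.2 (hg' (Ioo_subset_Icc_self hx) (right_mem_Icc.2 huv) hx.2.le)
  have := hmono (left_mem_Icc.2 huv) (right_mem_Icc.2 huv) huv
  linarith

end Convex

section Taylor

variable {f f' f'' : ℝ → ℝ} (huv : u ≤ v)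
  (hf' : ∀ x ∈ Icc u v, HasDerivWithinAt f (f' x) (Icc u v) x)
  (hf'' : ∀ x ∈ Icc u v, HasDerivWithinAt f' (f'' x) (Icc u v) x)
include huv hf' hf''

theorem taylor_lower_bound_of_le_second_deriv {m : ℝ} (hm : ∀ x ∈ Icc u v, m ≤ f'' x) :
    f u + (v - u) * f' u + m * (v - u) ^ 2 / 2 ≤ f v ∧
      f v + (u - v) * f' v + m * (u - v) ^ 2 / 2 ≤ f u := by
  have hg : ∀ x ∈ Icc u v,
      HasDerivWithinAt (fun x => f x - m * x ^ 2 / 2) (f' x - m * x) (Icc u v) x := fun x hx =>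
    ((hf' x hx).fun_sub ((hasDerivWithinAt_pow 2 x).const_mul m |>.div_const 2)).congr_deriv
      (by ring)
  have hg' : MonotoneOn (fun x => f' x - m * x) (Icc u v) := by
    refine monotoneOn_Icc_of_hasDerivWithinAt_nonneg (φ' := fun x => f'' x - m) (fun x hx => ?_)
      fun x hx => sub_nonneg.2 (hm x (Ioo_subset_Icc_self hx))
    exact ((hf'' x hx).fun_sub ((hasDerivWithinAt_id x _).const_mul m)).congr_deriv (by ring)
  have hleft := add_mul_deriv_le_of_monotoneOn_left huv hg hg'
  have hright := add_mul_deriv_le_of_monotoneOn_right huv hg hg'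
  constructor
  · linear_combination hleft
  · linear_combination hright

theorem taylor_upper_bound_of_second_deriv_le {M : ℝ} (hM : ∀ x ∈ Icc u v, f'' x ≤ M) :
    f v ≤ f u + (v - u) * f' u + M * (v - u) ^ 2 / 2 ∧
      f u ≤ f v + (u - v) * f' v + M * (u - v) ^ 2 / 2 := by
  have := taylor_lower_bound_of_le_second_deriv (f := -f) (f' := -f') (f'' := -f'') (m := -M) huv
    (fun x hx => (hf' x hx).neg) (fun x hx => (hf'' x hx).neg) fun x hx => neg_le_neg (hM x hx)
  simp only [Pi.neg_apply] at this
  constructor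
  · linear_combination this.1
  · linear_combination this.2

end Taylor

end Icc

theorem taylor_like_trapezoid_general
    (a b : ℝ) (hab : a < b)
    (f f' f'' : ℝ → ℝ) (m2 M2 ε : ℝ)
    (hf' : ∀ x ∈ Icc a b, HasDerivWithinAt f (f' x) (Icc a b) x)
    (hf'' : ∀ x ∈ Icc a b, HasDerivWithinAt f' (f'' x) (Icc a b) x)
    (hm2 : ∀ x ∈ Icc a b, m2 ≤ f'' x)
    (hM2 : ∀ x ∈ Icc a b, f'' x ≤ M2)
    (hε : f b = f a + (b - a) * ((f' a + f' b) / 2) + (b - a) * ε) :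
    (b - a) * (m2 - M2) / 8 ≤ ε ∧ ε ≤ (b - a) * (M2 - m2) / 8 := by
  have hleft : Icc a ((a + b) / 2) ⊆ Icc a b := Icc_subset_Icc le_rfl (by linarith)
  have hright : Icc ((a + b) / 2) b ⊆ Icc a b := Icc_subset_Icc (by linarith) le_rfl
  have restrict {s : Set ℝ} (hs : s ⊆ Icc a b) {φ φ' : ℝ → ℝ}
      (h : ∀ x ∈ Icc a b, HasDerivWithinAt φ (φ' x) (Icc a b) x) :
      ∀ x ∈ s, HasDerivWithinAt φ (φ' x) s x := fun x hx => (h x (hs hx)).mono hs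
  obtain ⟨hl_m, -⟩ := taylor_lower_bound_of_le_second_deriv (by linarith)
    (restrict hleft hf') (restrict hleft hf'') fun x hx => hm2 x (hleft hx)
  obtain ⟨hl_M, -⟩ := taylor_upper_bound_of_second_deriv_le (by linarith)
    (restrict hleft hf') (restrict hleft hf'') fun x hx => hM2 x (hleft hx)
  obtain ⟨-, hr_m⟩ := taylor_lower_bound_of_le_second_deriv (by linarith)
    (restrict hright hf') (restrict hright hf'') fun x hx => hm2 x (hright hx)
  obtain ⟨-, hr_M⟩ := taylor_upper_bound_of_second_deriv_le (by linarith)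
    (restrict hright hf') (restrict hright hf'') fun x hx => hM2 x (hright hx)
  have hba : 0 < b - a := sub_pos.2 hab
  constructor
  · refine le_of_mul_le_mul_left ?_ hba
    linear_combination hl_m + hr_M + hε
  · refine le_of_mul_le_mul_left ?_ hba
    linear_combination hl_M + hr_m - hε

/-- Trapezoid-type first-order Taylor-like formula: if `f ∈ C²([a,b])` with
`m₂ ≤ f'' ≤ M₂` on `[a,b]`, and `ε` is the remainder defined by
`f(b) = f(a) + (b-a)·(f'(a)+f'(b))/2 + (b-a)·ε`, then
`(b-a)(m₂-M₂)/8 ≤ ε ≤ (b-a)(M₂-m₂)/8`. -/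
theorem taylor_like_trapezoid
    (a b : ℝ) (hab : a < b)
    (f f' f'' : ℝ → ℝ) (m2 M2 ε : ℝ)
    (hf' : ∀ x ∈ Icc a b, HasDerivWithinAt f (f' x) (Icc a b) x)
    (hf'' : ∀ x ∈ Icc a b, HasDerivWithinAt f' (f'' x) (Icc a b) x)
    (hf''cont : ContinuousOn f'' (Icc a b))
    (hm2 : ∀ x ∈ Icc a b, m2 ≤ f'' x)
    (hM2 : ∀ x ∈ Icc a b, f'' x ≤ M2)
    (hε : f b = f a + (b - a) * ((f' a + f' b) / 2) + (b - a) * ε) :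
    (b - a) * (m2 - M2) / 8 ≤ ε ∧ ε ≤ (b - a) * (M2 - m2) / 8 :=
  taylor_like_trapezoid_general a b hab f f' f'' m2 M2 ε hf' hf'' hm2 hM2 hε
end

section
/- Let u ∈ C²([0,1]) with m₂ ≤ u''(x) ≤ M₂ for all x ∈ [0,1], let 0 = x₀ < x₁ < … < x_{N+1} = 1 be a partition with hᵢ = x_{i+1} - xᵢ and h = max_{0≤i≤N} hᵢ, and let u_I be the piecewise linear interpolant of u. Then for every integer n ≥ 1: ∫₀¹ |u(x) - u_I(x)| dx + Σ_{i=0}^{N} ∫_{xᵢ}^{x_{i+1}} |u'(x) - (u(x_{i+1}) - u(xᵢ))/hᵢ| dx ≤ ((h + h²)/2)·‖u''‖_∞ + ((h + h²)/(8n))·(M₂ - m₂). -/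
/-! On a cell `[a, b]` the mean value theorem gives `ξ` with `u' ξ` equal to the slope of the
chord, so `|u' x - slope| ≤ ‖u''‖_∞ |x - ξ|`, whose integral is at most `‖u''‖_∞ (b - a)² / 2`.
Bounding `|x - ξ|` by `b - a` and integrating once more from `a` gives
`|u x - u_I x| ≤ ‖u''‖_∞ (b - a) (x - a)`. Summing over the cells yields
`‖u - u_I‖_{1,1} ≤ ‖u''‖_∞ (h + h²) / 2`; the term in `M₂ - m₂` is nonnegative. -/

open Set intervalIntegral MeasureTheory

theorem integral_abs_sub_eq {a b c : ℝ} (hac : a ≤ c) (hcb : c ≤ b) :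
    ∫ x in a..b, |x - c| = ((c - a) ^ 2 + (b - c) ^ 2) / 2 := by
  have hint : ∀ p q : ℝ, IntervalIntegrable (fun x => |x - c|) volume p q :=
    fun p q => (continuous_id.sub continuous_const).abs.intervalIntegrable p q
  have left : ∫ x in a..c, |x - c| = ∫ x in a..c, (c - x) :=
    integral_congr fun x hx => by
      rw [uIcc_of_le hac] at hx
      exact abs_of_nonpos (by linarith [hx.2]) |>.trans (neg_sub x c)
  have right : ∫ x in c..b, |x - c| = ∫ x in c..b, (x - c) :=
    integral_congr fun x hx => by
      rw [uIcc_of_le hcb] at hx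
      exact abs_of_nonneg (by linarith [hx.1])
  rw [← integral_add_adjacent_intervals (hint a c) (hint c b), left, right,
    integral_sub intervalIntegrable_const intervalIntegrable_id,
    integral_sub intervalIntegrable_id intervalIntegrable_const]
  simp only [integral_id, intervalIntegral.integral_const, smul_eq_mul]
  ring

section OneInterval

variable {u u' u'' : ℝ → ℝ} {a b S : ℝ}

theorem exists_abs_deriv_sub_slope_le (hab : a < b)
    (hu : ∀ t ∈ Icc a b, HasDerivWithinAt u (u' t) (Icc a b) t)
    (hu' : ∀ t ∈ Icc a b, HasDerivWithinAt u' (u'' t) (Icc a b) t)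
    (hS : ∀ t ∈ Icc a b, |u'' t| ≤ S) :
    ∃ ξ ∈ Icc a b, ∀ x ∈ Icc a b, |u' x - (u b - u a) / (b - a)| ≤ S * |x - ξ| := by
  obtain ⟨ξ, hξ, hξslope⟩ : ∃ ξ ∈ Ioo a b, u' ξ = (u b - u a) / (b - a) :=
    exists_hasDerivAt_eq_slope u u' hab (fun t ht => (hu t ht).continuousWithinAt)
      fun t ht => (hu t (Ioo_subset_Icc_self ht)).hasDerivAt (Icc_mem_nhds ht.1 ht.2)
  refine ⟨ξ, Ioo_subset_Icc_self hξ, fun x hx => ?_⟩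
  rw [← hξslope]
  simpa only [Real.norm_eq_abs] using (convex_Icc a b).norm_image_sub_le_of_norm_hasDerivWithin_le
    hu' (by simpa only [Real.norm_eq_abs] using hS) (Ioo_subset_Icc_self hξ) hx

theorem integral_abs_deriv_sub_slope_le (hab : a < b)
    (hu : ∀ t ∈ Icc a b, HasDerivWithinAt u (u' t) (Icc a b) t)
    (hu' : ∀ t ∈ Icc a b, HasDerivWithinAt u' (u'' t) (Icc a b) t)
    (hS : ∀ t ∈ Icc a b, |u'' t| ≤ S) :
    ∫ x in a..b, |u' x - (u b - u a) / (b - a)| ≤ S * (b - a) ^ 2 / 2 := by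
  obtain ⟨ξ, hξ, hle⟩ := exists_abs_deriv_sub_slope_le hab hu hu' hS
  have hS0 : 0 ≤ S := (abs_nonneg _).trans (hS a (left_mem_Icc.2 hab.le))
  have hcont : ContinuousOn u' (uIcc a b) := by
    rw [uIcc_of_le hab.le]; exact fun t ht => (hu' t ht).continuousWithinAt
  calc ∫ x in a..b, |u' x - (u b - u a) / (b - a)|
      ≤ ∫ x in a..b, S * |x - ξ| :=
        integral_mono_on hab.le (hcont.sub continuousOn_const).abs.intervalIntegrable
          (Continuous.intervalIntegrable (by fun_prop) _ _) hle
    _ = S * (((ξ - a) ^ 2 + (b - ξ) ^ 2) / 2) := by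
        rw [intervalIntegral.integral_const_mul, integral_abs_sub_eq hξ.1 hξ.2]
    _ ≤ S * (b - a) ^ 2 / 2 := by
        rw [mul_div_assoc]
        gcongr
        nlinarith [hξ.1, hξ.2]

theorem abs_sub_interp_le (hab : a < b)
    (hu : ∀ t ∈ Icc a b, HasDerivWithinAt u (u' t) (Icc a b) t)
    (hu' : ∀ t ∈ Icc a b, HasDerivWithinAt u' (u'' t) (Icc a b) t)
    (hS : ∀ t ∈ Icc a b, |u'' t| ≤ S) {x : ℝ} (hx : x ∈ Icc a b) :
    |u x - (u a + (x - a) * (u b - u a) / (b - a))| ≤ S * (b - a) * (x - a) := by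
  set L := (u b - u a) / (b - a)
  obtain ⟨ξ, hξ, hle⟩ := exists_abs_deriv_sub_slope_le hab hu hu' hS
  have hS0 : 0 ≤ S := (abs_nonneg _).trans (hS a (left_mem_Icc.2 hab.le))
  have hderiv : ∀ t ∈ Icc a b, HasDerivWithinAt (fun t => u t - L * t) (u' t - L) (Icc a b) t :=
    fun t ht => (hu t ht).sub (by simpa using (hasDerivWithinAt_id t (Icc a b)).const_mul L)
  have hderiv_le : ∀ t ∈ Icc a b, ‖u' t - L‖ ≤ S * (b - a) := fun t ht =>
    (hle t ht).trans <| by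
      gcongr
      exact abs_sub_le_iff.2 ⟨by linarith [ht.2, hξ.1], by linarith [ht.1, hξ.2]⟩
  have hmvt := (convex_Icc a b).norm_image_sub_le_of_norm_hasDerivWithin_le hderiv hderiv_le
    (left_mem_Icc.2 hab.le) hx
  rw [Real.norm_eq_abs, Real.norm_eq_abs, abs_of_nonneg (sub_nonneg.2 hx.1)] at hmvt
  rw [mul_div_assoc]
  calc |u x - (u a + (x - a) * L)| = |u x - L * x - (u a - L * a)| := by ring_nf
    _ ≤ S * (b - a) * (x - a) := hmvt

theorem integral_abs_sub_interp_add_integral_abs_deriv_sub_slope_le (hab : a < b)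
    (hu : ∀ t ∈ Icc a b, HasDerivWithinAt u (u' t) (Icc a b) t)
    (hu' : ∀ t ∈ Icc a b, HasDerivWithinAt u' (u'' t) (Icc a b) t)
    (hS : ∀ t ∈ Icc a b, |u'' t| ≤ S) :
    (∫ x in a..b, |u x - (u a + (x - a) * (u b - u a) / (b - a))|)
      + ∫ x in a..b, |u' x - (u b - u a) / (b - a)|
      ≤ S * ((b - a) + (b - a) ^ 2) / 2 * (b - a) := by
  have hcont : ContinuousOn u (uIcc a b) := by
    rw [uIcc_of_le hab.le]; exact fun t ht => (hu t ht).continuousWithinAt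
  have hvalue : ∫ x in a..b, |u x - (u a + (x - a) * (u b - u a) / (b - a))|
      ≤ S * (b - a) ^ 3 / 2 :=
    calc _ ≤ ∫ x in a..b, S * (b - a) * (x - a) :=
          integral_mono_on hab.le
            (hcont.sub (Continuous.continuousOn (by fun_prop))).abs.intervalIntegrable
            (Continuous.intervalIntegrable (by fun_prop) _ _)
            fun x hx => abs_sub_interp_le hab hu hu' hS hx
      _ = S * (b - a) ^ 3 / 2 := by
          rw [intervalIntegral.integral_const_mul, integral_comp_sub_right (fun x => x),
            integral_id]
          ring
  linarith [integral_abs_deriv_sub_slope_le hab hu hu' hS]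

end OneInterval

theorem integral_abs_sub_interp_add_sum_le {u u' u'' uI : ℝ → ℝ} {N : ℕ} {S h : ℝ}
    {X : ℕ → ℝ} (hX : ∀ i ≤ N, X i < X (i + 1)) (hh : ∀ i ≤ N, X (i + 1) - X i ≤ h)
    (hu : ∀ t ∈ Icc (X 0) (X (N + 1)), HasDerivWithinAt u (u' t) (Icc (X 0) (X (N + 1))) t)
    (hu' : ∀ t ∈ Icc (X 0) (X (N + 1)), HasDerivWithinAt u' (u'' t) (Icc (X 0) (X (N + 1))) t)
    (hS : ∀ t ∈ Icc (X 0) (X (N + 1)), |u'' t| ≤ S)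
    (huI : ∀ i ≤ N, ∀ t ∈ Icc (X i) (X (i + 1)),
      uI t = u (X i) + (t - X i) * (u (X (i + 1)) - u (X i)) / (X (i + 1) - X i)) :
    (∫ t in (X 0)..(X (N + 1)), |u t - uI t|)
        + ∑ i ∈ Finset.range (N + 1),
            ∫ t in (X i)..(X (i + 1)), |u' t - (u (X (i + 1)) - u (X i)) / (X (i + 1) - X i)|
      ≤ S * (h + h ^ 2) / 2 * (X (N + 1) - X 0) := by
  have hmono : MonotoneOn X (Iic (N + 1)) :=
    (strictMonoOn_Iic_of_lt_succ fun m hm => hX m (Nat.lt_succ_iff.1 hm)).monotoneOn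
  have hsub : ∀ i ≤ N, Icc (X i) (X (i + 1)) ⊆ Icc (X 0) (X (N + 1)) := fun i hi =>
    Icc_subset_Icc (hmono (Nat.zero_le _) (mem_Iic.2 (by omega)) (Nat.zero_le _))
      (hmono (mem_Iic.2 (by omega)) self_mem_Iic (by omega))
  have hS0 : 0 ≤ S := (abs_nonneg _).trans
    (hS _ (left_mem_Icc.2 (hmono (Nat.zero_le _) self_mem_Iic (Nat.zero_le _))))
  have hpiece : ∀ i ≤ N,
      (∫ t in (X i)..(X (i + 1)), |u t - uI t|)
        + ∫ t in (X i)..(X (i + 1)), |u' t - (u (X (i + 1)) - u (X i)) / (X (i + 1) - X i)|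
      ≤ S * (h + h ^ 2) / 2 * (X (i + 1) - X i) := by
    intro i hi
    have hlen : 0 ≤ X (i + 1) - X i := sub_nonneg.2 (hX i hi).le
    have hinterp : ∫ t in (X i)..(X (i + 1)), |u t - uI t| = ∫ t in (X i)..(X (i + 1)),
        |u t - (u (X i) + (t - X i) * (u (X (i + 1)) - u (X i)) / (X (i + 1) - X i))| :=
      integral_congr fun t ht => by
        rw [uIcc_of_le (hX i hi).le] at ht
        simp only [huI i hi t ht]
    rw [hinterp]
    refine (integral_abs_sub_interp_add_integral_abs_deriv_sub_slope_le (hX i hi)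
      (fun t ht => (hu t (hsub i hi ht)).mono (hsub i hi))
      (fun t ht => (hu' t (hsub i hi ht)).mono (hsub i hi))
      (fun t ht => hS t (hsub i hi ht))).trans ?_
    gcongr <;> exact hh i hi
  have hint : ∀ i < N + 1,
      IntervalIntegrable (fun t => |u t - uI t|) volume (X i) (X (i + 1)) := by
    intro i hi
    have hi : i ≤ N := Nat.lt_succ_iff.1 hi
    refine ContinuousOn.intervalIntegrable ?_
    rw [uIcc_of_le (hX i hi).le]
    exact (ContinuousOn.sub (fun t ht => (hu t (hsub i hi ht)).continuousWithinAt.mono (hsub i hi))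
      (ContinuousOn.congr (Continuous.continuousOn (by fun_prop)) (huI i hi))).abs
  rw [← sum_integral_adjacent_intervals hint, ← Finset.sum_add_distrib, ← Finset.sum_range_sub,
    Finset.mul_sum]
  exact Finset.sum_le_sum fun i hi => hpiece i (Nat.lt_succ_iff.1 (Finset.mem_range.1 hi))

theorem interpolation_error_refined_general
    (N : ℕ) (u u' u'' : ℝ → ℝ) (m2 M2 : ℝ)
    (hu' : ∀ t ∈ Icc (0 : ℝ) 1, HasDerivWithinAt u (u' t) (Icc (0 : ℝ) 1) t)
    (hu'' : ∀ t ∈ Icc (0 : ℝ) 1, HasDerivWithinAt u' (u'' t) (Icc (0 : ℝ) 1) t)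
    (hm2 : ∀ t ∈ Icc (0 : ℝ) 1, m2 ≤ u'' t)
    (hM2 : ∀ t ∈ Icc (0 : ℝ) 1, u'' t ≤ M2)
    (X : ℕ → ℝ) (hX0 : X 0 = 0) (hXN : X (N + 1) = 1)
    (hXmono : ∀ i ≤ N, X i < X (i + 1))
    (h : ℝ) (hh : IsGreatest {d : ℝ | ∃ i ≤ N, d = X (i + 1) - X i} h)
    (uI : ℝ → ℝ)
    (huI : ∀ i ≤ N, ∀ t ∈ Icc (X i) (X (i + 1)),
      uI t = u (X i) + (t - X i) * (u (X (i + 1)) - u (X i)) / (X (i + 1) - X i)) :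
    ∀ n : ℕ, 1 ≤ n →
      (∫ t in (0 : ℝ)..1, |u t - uI t|)
        + ∑ i ∈ Finset.range (N + 1),
            ∫ t in (X i)..(X (i + 1)),
              |u' t - (u (X (i + 1)) - u (X i)) / (X (i + 1) - X i)|
        ≤ ((h + h ^ 2) / 2) * (⨆ t : Icc (0 : ℝ) 1, |u'' t|)
            + ((h + h ^ 2) / (8 * n)) * (M2 - m2) := by
  intro n _
  have hbdd : BddAbove (range fun t : Icc (0 : ℝ) 1 => |u'' t|) :=
    ⟨max |m2| |M2|, by rintro _ ⟨t, rfl⟩; exact abs_le_max_abs_abs (hm2 t t.2) (hM2 t t.2)⟩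
  have hS : ∀ t ∈ Icc (0 : ℝ) 1, |u'' t| ≤ ⨆ t : Icc (0 : ℝ) 1, |u'' t| :=
    fun t ht => le_ciSup hbdd ⟨t, ht⟩
  have hmesh : ∀ i ≤ N, X (i + 1) - X i ≤ h := fun i hi => hh.2 ⟨i, hi, rfl⟩
  have hh0 : 0 ≤ h := (sub_nonneg.2 (hXmono 0 (Nat.zero_le N)).le).trans (hmesh 0 (Nat.zero_le N))
  have hM2m2 : 0 ≤ M2 - m2 := sub_nonneg.2 <|
    (hm2 0 (left_mem_Icc.2 zero_le_one)).trans (hM2 0 (left_mem_Icc.2 zero_le_one))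
  have herror := integral_abs_sub_interp_add_sum_le hXmono hmesh (hX0 ▸ hXN ▸ hu')
    (hX0 ▸ hXN ▸ hu'') (hX0 ▸ hXN ▸ hS) huI
  rw [hX0, hXN, sub_zero, mul_one] at herror
  have hslack : 0 ≤ (h + h ^ 2) / (8 * n) * (M2 - m2) := by positivity
  linarith

/-- Refined `P₁`-interpolation error estimate in the `W^{1,1}`-norm obtained from the
first-order Taylor-like formula: for `u ∈ C²([0,1])` with `m₂ ≤ u'' ≤ M₂`, a partition
with mesh size `h`, `u_I` the piecewise linear interpolant, and every `n ≥ 1`,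
`‖u - u_I‖_{1,1} ≤ ((h+h²)/2)·‖u''‖_∞ + ((h+h²)/(8n))·(M₂-m₂)`. -/
theorem interpolation_error_refined
    (N : ℕ) (u u' u'' : ℝ → ℝ) (m2 M2 : ℝ)
    (hu' : ∀ t ∈ Icc (0 : ℝ) 1, HasDerivWithinAt u (u' t) (Icc (0 : ℝ) 1) t)
    (hu'' : ∀ t ∈ Icc (0 : ℝ) 1, HasDerivWithinAt u' (u'' t) (Icc (0 : ℝ) 1) t)
    (hu''cont : ContinuousOn u'' (Icc (0 : ℝ) 1))
    (hm2 : ∀ t ∈ Icc (0 : ℝ) 1, m2 ≤ u'' t)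
    (hM2 : ∀ t ∈ Icc (0 : ℝ) 1, u'' t ≤ M2)
    (X : ℕ → ℝ) (hX0 : X 0 = 0) (hXN : X (N + 1) = 1)
    (hXmono : ∀ i ≤ N, X i < X (i + 1))
    (h : ℝ) (hh : IsGreatest {d : ℝ | ∃ i ≤ N, d = X (i + 1) - X i} h)
    (uI : ℝ → ℝ)
    (huI : ∀ i ≤ N, ∀ t ∈ Icc (X i) (X (i + 1)),
      uI t = u (X i) + (t - X i) * (u (X (i + 1)) - u (X i)) / (X (i + 1) - X i)) :
    ∀ n : ℕ, 1 ≤ n →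
      (∫ t in (0 : ℝ)..1, |u t - uI t|)
        + ∑ i ∈ Finset.range (N + 1),
            ∫ t in (X i)..(X (i + 1)),
              |u' t - (u (X (i + 1)) - u (X i)) / (X (i + 1) - X i)|
        ≤ ((h + h ^ 2) / 2) * (⨆ t : Icc (0 : ℝ) 1, |u'' t|)
            + ((h + h ^ 2) / (8 * n)) * (M2 - m2) :=
  interpolation_error_refined_general N u u' u'' m2 M2 hu' hu'' hm2 hM2 X hX0 hXN hXmono h hh uI huI
end

section
/- Let u ∈ C²([0,1]) with m₂ ≤ u''(x) ≤ M₂ for all x ∈ [0,1], let 0 = x₀ < x₁ < … < x_{N+1} = 1 be a partition with hᵢ = x_{i+1} - xᵢ and h = max_{0≤i≤N} hᵢ, and let u_I be the piecewise linear interpolant of u. Then for every integer n ≥ 1: ∫₀¹ |u(x) - u_I(x)| dx ≤ (h²/2)·‖u''‖_∞ + (h²/(8n))·(M₂ - m₂). -/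
/-!
On a cell `[a, b]` the error `e = u - u_I` vanishes at `a`, and by the mean value theorem
`e' = u' - u'(c)` for some `c ∈ [a, b]`; hence `|e'| ≤ ‖u''‖_∞ h` and `|e x| ≤ ‖u''‖_∞ h (x - a)`.
Integrating gives `‖u''‖_∞ h (b - a)² / 2 ≤ ‖u''‖_∞ h² (b - a) / 2` per cell, and the cells
add up to `h² ‖u''‖_∞ / 2`. The second term of the bound is nonnegative because `m₂ ≤ M₂`.
-/

open Set

noncomputable def secant (u : ℝ → ℝ) (a b x : ℝ) : ℝ :=
  u a + (x - a) * (u b - u a) / (b - a)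

theorem hasDerivAt_secant (u : ℝ → ℝ) (a b x : ℝ) :
    HasDerivAt (secant u a b) ((u b - u a) / (b - a)) x := by
  have :=
    ((((hasDerivAt_id x).sub_const a).mul_const (u b - u a)).div_const (b - a)).const_add (u a)
  rwa [one_mul] at this

theorem continuous_secant (u : ℝ → ℝ) (a b : ℝ) : Continuous (secant u a b) :=
  continuous_iff_continuousAt.2 fun x => (hasDerivAt_secant u a b x).continuousAt

section Cell

variable {u u' : ℝ → ℝ} {a b K : ℝ}

theorem exists_mem_Icc_deriv_eq_slope (hab : a < b)
    (hu : ∀ x ∈ Icc a b, HasDerivWithinAt u (u' x) (Icc a b) x) :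
    ∃ c ∈ Icc a b, u' c = (u b - u a) / (b - a) := by
  obtain ⟨c, hc, hslope⟩ := exists_hasDerivAt_eq_slope u u' hab
    (fun x hx => (hu x hx).continuousWithinAt)
    (fun x hx => (hu x (Ioo_subset_Icc_self hx)).hasDerivAt (Icc_mem_nhds hx.1 hx.2))
  exact ⟨c, Ioo_subset_Icc_self hc, hslope⟩

theorem abs_sub_secant_le (hab : a < b)
    (hu : ∀ x ∈ Icc a b, HasDerivWithinAt u (u' x) (Icc a b) x)
    (hosc : ∀ x ∈ Icc a b, ∀ y ∈ Icc a b, |u' x - u' y| ≤ K) {x : ℝ} (hx : x ∈ Icc a b) :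
    |u x - secant u a b x| ≤ K * (x - a) := by
  obtain ⟨c, hc, hslope⟩ := exists_mem_Icc_deriv_eq_slope hab hu
  have herr : ∀ y ∈ Icc a b, HasDerivWithinAt (fun y => u y - secant u a b y)
      (u' y - u' c) (Icc a b) y := fun y hy =>
    hslope ▸ (hu y hy).sub (hasDerivAt_secant u a b y).hasDerivWithinAt
  have := (convex_Icc a b).norm_image_sub_le_of_norm_hasDerivWithin_le herr
    (fun y hy => hosc y hy c hc) (left_mem_Icc.2 hab.le) hx
  simpa [secant, Real.norm_eq_abs, abs_of_nonneg (sub_nonneg.2 hx.1)] using this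

theorem continuousOn_abs_sub_secant (hu : ContinuousOn u (Icc a b)) :
    ContinuousOn (fun x => |u x - secant u a b x|) (Icc a b) :=
  (hu.sub (continuous_secant u a b).continuousOn).abs

theorem integral_abs_sub_secant_le (hab : a < b)
    (hu : ∀ x ∈ Icc a b, HasDerivWithinAt u (u' x) (Icc a b) x)
    (hosc : ∀ x ∈ Icc a b, ∀ y ∈ Icc a b, |u' x - u' y| ≤ K) :
    ∫ x in a..b, |u x - secant u a b x| ≤ K / 2 * (b - a) ^ 2 := by
  have hcont := continuousOn_abs_sub_secant (fun x hx => (hu x hx).continuousWithinAt)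
  calc ∫ x in a..b, |u x - secant u a b x|
      ≤ ∫ x in a..b, K * (x - a) :=
        intervalIntegral.integral_mono_on hab.le (hcont.intervalIntegrable_of_Icc hab.le)
          ((by fun_prop : Continuous fun x => K * (x - a)).intervalIntegrable _ _)
          fun x hx => abs_sub_secant_le hab hu hosc hx
    _ = K / 2 * (b - a) ^ 2 := by
        rw [intervalIntegral.integral_comp_sub_right fun x => K * x,
          intervalIntegral.integral_const_mul, integral_id]
        ring

end Cell

section Partition

variable {N : ℕ} {X : ℕ → ℝ}

theorem Icc_succ_subset_Icc_of_lt_succ (hX : ∀ i ≤ N, X i < X (i + 1)) {i : ℕ} (hi : i ≤ N) :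
    Icc (X i) (X (i + 1)) ⊆ Icc (X 0) (X (N + 1)) := by
  have hmono : MonotoneOn X (Iic (N + 1)) :=
    (strictMonoOn_Iic_of_lt_succ fun m hm => by simpa using hX m (Nat.lt_succ_iff.1 hm)).monotoneOn
  exact Icc_subset_Icc (hmono (by simp) (by simp; omega) (Nat.zero_le i))
    (hmono (by simp; omega) (by simp) (by omega))

theorem sum_sq_sub_le_mul (hX : ∀ i ≤ N, X i ≤ X (i + 1)) {h : ℝ}
    (hh : ∀ i ≤ N, X (i + 1) - X i ≤ h) :
    ∑ i ∈ Finset.range (N + 1), (X (i + 1) - X i) ^ 2 ≤ h * (X (N + 1) - X 0) := by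
  calc ∑ i ∈ Finset.range (N + 1), (X (i + 1) - X i) ^ 2
      ≤ ∑ i ∈ Finset.range (N + 1), h * (X (i + 1) - X i) := by
        refine Finset.sum_le_sum fun i hi => ?_
        have hi : i ≤ N := Nat.lt_succ_iff.1 (Finset.mem_range.1 hi)
        rw [sq]
        exact mul_le_mul_of_nonneg_right (hh i hi) (sub_nonneg.2 (hX i hi))
    _ = h * (X (N + 1) - X 0) := by rw [← Finset.mul_sum, Finset.sum_range_sub]

theorem integral_abs_sub_le_of_eqOn_secant {u u' uI : ℝ → ℝ} {K : ℝ}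
    (hX : ∀ i ≤ N, X i < X (i + 1))
    (hu : ∀ i ≤ N, ∀ x ∈ Icc (X i) (X (i + 1)),
      HasDerivWithinAt u (u' x) (Icc (X i) (X (i + 1))) x)
    (hosc : ∀ i ≤ N, ∀ x ∈ Icc (X i) (X (i + 1)), ∀ y ∈ Icc (X i) (X (i + 1)),
      |u' x - u' y| ≤ K)
    (huI : ∀ i ≤ N, EqOn uI (secant u (X i) (X (i + 1))) (Icc (X i) (X (i + 1)))) :
    ∫ x in X 0..X (N + 1), |u x - uI x|
      ≤ K / 2 * ∑ i ∈ Finset.range (N + 1), (X (i + 1) - X i) ^ 2 := by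
  have hcell : ∀ i ≤ N, EqOn (fun x => |u x - uI x|)
      (fun x => |u x - secant u (X i) (X (i + 1)) x|) (Icc (X i) (X (i + 1))) :=
    fun i hi x hx => by simp only [huI i hi hx]
  rw [← intervalIntegral.sum_integral_adjacent_intervals fun i hi =>
    ((continuousOn_abs_sub_secant fun x hx => (hu i (by omega) x hx).continuousWithinAt).congr
      (hcell i (by omega))).intervalIntegrable_of_Icc (hX i (by omega)).le, Finset.mul_sum]
  refine Finset.sum_le_sum fun i hi => ?_
  have hi : i ≤ N := Nat.lt_succ_iff.1 (Finset.mem_range.1 hi)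
  rw [intervalIntegral.integral_congr ((uIcc_of_le (hX i hi).le).symm ▸ hcell i hi)]
  exact integral_abs_sub_secant_le (hX i hi) (hu i hi) (hosc i hi)

end Partition

theorem interpolation_L1_error_refined_general
    (N : ℕ) (u u' u'' : ℝ → ℝ) (m2 M2 : ℝ)
    (hu' : ∀ t ∈ Icc (0 : ℝ) 1, HasDerivWithinAt u (u' t) (Icc (0 : ℝ) 1) t)
    (hu'' : ∀ t ∈ Icc (0 : ℝ) 1, HasDerivWithinAt u' (u'' t) (Icc (0 : ℝ) 1) t)
    (hm2 : ∀ t ∈ Icc (0 : ℝ) 1, m2 ≤ u'' t)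
    (hM2 : ∀ t ∈ Icc (0 : ℝ) 1, u'' t ≤ M2)
    (X : ℕ → ℝ) (hX0 : X 0 = 0) (hXN : X (N + 1) = 1)
    (hXmono : ∀ i ≤ N, X i < X (i + 1))
    (h : ℝ) (hh : IsGreatest {d : ℝ | ∃ i ≤ N, d = X (i + 1) - X i} h)
    (uI : ℝ → ℝ)
    (huI : ∀ i ≤ N, ∀ t ∈ Icc (X i) (X (i + 1)),
      uI t = u (X i) + (t - X i) * (u (X (i + 1)) - u (X i)) / (X (i + 1) - X i)) :
    ∀ n : ℕ, 1 ≤ n →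
      (∫ t in (0 : ℝ)..1, |u t - uI t|)
        ≤ (h ^ 2 / 2) * (⨆ t : Icc (0 : ℝ) 1, |u'' t|) + (h ^ 2 / (8 * n)) * (M2 - m2) := by
  intro n _
  set C := ⨆ t : Icc (0 : ℝ) 1, |u'' t|
  have h01 : (0 : ℝ) ∈ Icc (0 : ℝ) 1 := ⟨le_rfl, zero_le_one⟩
  have hC : ∀ t ∈ Icc (0 : ℝ) 1, |u'' t| ≤ C := fun t ht =>
    le_ciSup ⟨max |m2| |M2|, by
      rintro _ ⟨s, rfl⟩
      exact abs_le_max_abs_abs (hm2 s s.2) (hM2 s s.2)⟩ (⟨t, ht⟩ : Icc (0 : ℝ) 1)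
  have hC0 : 0 ≤ C := (abs_nonneg _).trans (hC 0 h01)
  have hh0 : 0 ≤ h :=
    (sub_pos.2 (hXmono 0 (Nat.zero_le N))).le.trans (hh.2 ⟨0, Nat.zero_le N, rfl⟩)
  have hsub : ∀ i ≤ N, Icc (X i) (X (i + 1)) ⊆ Icc 0 1 := fun i hi =>
    hX0 ▸ hXN ▸ Icc_succ_subset_Icc_of_lt_succ hXmono hi
  have hosc : ∀ i ≤ N, ∀ x ∈ Icc (X i) (X (i + 1)), ∀ y ∈ Icc (X i) (X (i + 1)),
      |u' x - u' y| ≤ C * h := fun i hi x hx y hy =>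
    calc |u' x - u' y| ≤ C * |x - y| := by
          simpa using (convex_Icc (0 : ℝ) 1).norm_image_sub_le_of_norm_hasDerivWithin_le
            hu'' hC (hsub i hi hy) (hsub i hi hx)
      _ ≤ C * h := mul_le_mul_of_nonneg_left
          ((Real.dist_le_of_mem_Icc hx hy).trans (hh.2 ⟨i, hi, rfl⟩)) hC0
  have hcells := integral_abs_sub_le_of_eqOn_secant hXmono
    (fun i hi x hx => (hu' x (hsub i hi hx)).mono (hsub i hi)) hosc huI
  have hmesh := sum_sq_sub_le_mul (fun i hi => (hXmono i hi).le) fun i hi => hh.2 ⟨i, hi, rfl⟩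
  rw [hX0, hXN] at hcells hmesh
  have hm : m2 ≤ M2 := (hm2 0 h01).trans (hM2 0 h01)
  calc ∫ t in (0 : ℝ)..1, |u t - uI t|
      ≤ C * h / 2 * (h * (1 - 0)) :=
        hcells.trans (mul_le_mul_of_nonneg_left hmesh (by positivity))
    _ = h ^ 2 / 2 * C := by ring
    _ ≤ _ := le_add_of_nonneg_right (mul_nonneg (by positivity) (sub_nonneg.2 hm))

/-- Refined `L¹` estimate of the interpolation error: for `u ∈ C²([0,1])` with
`m₂ ≤ u'' ≤ M₂`, a partition with mesh size `h`, `u_I` the piecewise linear interpolant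
of `u`, and every `n ≥ 1`, `∫₀¹ |u - u_I| ≤ (h²/2)·‖u''‖_∞ + (h²/(8n))·(M₂-m₂)`. -/
theorem interpolation_L1_error_refined
    (N : ℕ) (u u' u'' : ℝ → ℝ) (m2 M2 : ℝ)
    (hu' : ∀ t ∈ Icc (0 : ℝ) 1, HasDerivWithinAt u (u' t) (Icc (0 : ℝ) 1) t)
    (hu'' : ∀ t ∈ Icc (0 : ℝ) 1, HasDerivWithinAt u' (u'' t) (Icc (0 : ℝ) 1) t)
    (hu''cont : ContinuousOn u'' (Icc (0 : ℝ) 1))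
    (hm2 : ∀ t ∈ Icc (0 : ℝ) 1, m2 ≤ u'' t)
    (hM2 : ∀ t ∈ Icc (0 : ℝ) 1, u'' t ≤ M2)
    (X : ℕ → ℝ) (hX0 : X 0 = 0) (hXN : X (N + 1) = 1)
    (hXmono : ∀ i ≤ N, X i < X (i + 1))
    (h : ℝ) (hh : IsGreatest {d : ℝ | ∃ i ≤ N, d = X (i + 1) - X i} h)
    (uI : ℝ → ℝ)
    (huI : ∀ i ≤ N, ∀ t ∈ Icc (X i) (X (i + 1)),
      uI t = u (X i) + (t - X i) * (u (X (i + 1)) - u (X i)) / (X (i + 1) - X i)) :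
    ∀ n : ℕ, 1 ≤ n →
      (∫ t in (0 : ℝ)..1, |u t - uI t|)
        ≤ (h ^ 2 / 2) * (⨆ t : Icc (0 : ℝ) 1, |u'' t|) + (h ^ 2 / (8 * n)) * (M2 - m2) :=
  interpolation_L1_error_refined_general N u u' u'' m2 M2 hu' hu'' hm2 hM2 X hX0 hXN hXmono h hh uI
    huI
end

section
/- Let I ⊆ ℝ be open, T > 0, and let u : I × [0,T] → ℝ satisfy the heat equation ∂u/∂t(x,t) = ∂²u/∂x²(x,t) on I × [0,T]. Assume u is C² in time with m₂ ≤ ∂²u/∂t²(x,t) ≤ M₂ for all (x,t) ∈ I × [0,T]. Then for every x ∈ I, every k > 0 and every t with t + k ≤ T: | ∂u/∂t(x,t) - (2/k)·(u(x,t+k) - u(x,t)) + ∂²u/∂x²(x,t+k) | ≤ (k/4)·(M₂ - m₂). -/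
/-!
Let `p` be the midpoint of `[a, b]` and `G c y = (y - p) f'(y) - f(y) - c (y - p)² / 2`. Then
`G 0 b - G 0 a` is the trapezoid error `(b - a)/2 (f' a + f' b) - (f b - f a)`, while the
derivative `(y - p) (f'' y - c)` of `G c` has a known sign on each half of `[a, b]` when
`c = m` or `c = M`. Chaining the resulting monotonicity of `G m` and `G M` through `p` bounds the
error by `(M - m)(b - a)² / 8`. With `b - a = k`, the heat equation at `t + k` makes the
expression of the theorem `2/k` times this error.
-/

open Set

section TrapezoidDerivative

variable {a b : ℝ}

theorem antitoneOn_Icc_of_hasDerivWithinAt_nonpos {g g' : ℝ → ℝ}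
    (hg : ∀ x ∈ Icc a b, HasDerivWithinAt g (g' x) (Icc a b) x)
    (hg' : ∀ x ∈ Ioo a b, g' x ≤ 0) : AntitoneOn g (Icc a b) :=
  antitoneOn_of_hasDerivWithinAt_nonpos (convex_Icc a b)
    (fun x hx ↦ (hg x hx).continuousWithinAt)
    (by simpa only [interior_Icc] using
      fun x hx ↦ (hg x (Ioo_subset_Icc_self hx)).mono Ioo_subset_Icc_self)
    (by simpa only [interior_Icc] using hg')

theorem monotoneOn_Icc_of_hasDerivWithinAt_nonneg_s13 {g g' : ℝ → ℝ}
    (hg : ∀ x ∈ Icc a b, HasDerivWithinAt g (g' x) (Icc a b) x)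
    (hg' : ∀ x ∈ Ioo a b, 0 ≤ g' x) : MonotoneOn g (Icc a b) :=
  monotoneOn_of_hasDerivWithinAt_nonneg (convex_Icc a b)
    (fun x hx ↦ (hg x hx).continuousWithinAt)
    (by simpa only [interior_Icc] using
      fun x hx ↦ (hg x (Ioo_subset_Icc_self hx)).mono Ioo_subset_Icc_self)
    (by simpa only [interior_Icc] using hg')

variable {f f' f'' : ℝ → ℝ}

theorem hasDerivWithinAt_sub_mul_deriv_sub_sq {s : Set ℝ} {x : ℝ} (p c : ℝ)
    (hf : HasDerivWithinAt f (f' x) s x) (hf' : HasDerivWithinAt f' (f'' x) s x) :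
    HasDerivWithinAt (fun y ↦ (y - p) * f' y - f y - c * (y - p) ^ 2 / 2)
      ((x - p) * (f'' x - c)) s x := by
  have hlin : HasDerivWithinAt (fun y ↦ y - p) 1 s x := (hasDerivWithinAt_id x s).sub_const p
  exact (((hlin.mul hf').sub hf).sub (((hlin.pow 2).const_mul c).div_const 2)).congr_deriv
    (by ring)

theorem abs_trapezoid_deriv_error_le (hab : a ≤ b)
    (hf : ∀ x ∈ Icc a b, HasDerivWithinAt f (f' x) (Icc a b) x)
    (hf' : ∀ x ∈ Icc a b, HasDerivWithinAt f' (f'' x) (Icc a b) x)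
    {m M : ℝ} (hm : ∀ x ∈ Icc a b, m ≤ f'' x) (hM : ∀ x ∈ Icc a b, f'' x ≤ M) :
    |(b - a) / 2 * (f' a + f' b) - (f b - f a)| ≤ (M - m) * (b - a) ^ 2 / 8 := by
  set p := (a + b) / 2 with hp
  have hap : a ≤ p := by linarith
  have hpb : p ≤ b := by linarith
  set G : ℝ → ℝ → ℝ := fun c y ↦ (y - p) * f' y - f y - c * (y - p) ^ 2 / 2
  have hG : ∀ c α β, Icc α β ⊆ Icc a b →
      ∀ x ∈ Icc α β, HasDerivWithinAt (G c) ((x - p) * (f'' x - c)) (Icc α β) x :=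
    fun c α β hsub x hx ↦
      (hasDerivWithinAt_sub_mul_deriv_sub_sq p c (hf x (hsub hx)) (hf' x (hsub hx))).mono hsub
  have hleft : Icc a p ⊆ Icc a b := Icc_subset_Icc le_rfl hpb
  have hright : Icc p b ⊆ Icc a b := Icc_subset_Icc hap le_rfl
  have hal : a ∈ Icc a p := left_mem_Icc.2 hap
  have hpl : p ∈ Icc a p := right_mem_Icc.2 hap
  have hpr : p ∈ Icc p b := left_mem_Icc.2 hpb
  have hbr : b ∈ Icc p b := right_mem_Icc.2 hpb
  have h₁ : G m p ≤ G m a :=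
    antitoneOn_Icc_of_hasDerivWithinAt_nonpos (hG m a p hleft) (fun x hx ↦
      mul_nonpos_of_nonpos_of_nonneg (by linarith [hx.2])
        (sub_nonneg.2 (hm x (hleft (Ioo_subset_Icc_self hx))))) hal hpl hap
  have h₂ : G M b ≤ G M p :=
    antitoneOn_Icc_of_hasDerivWithinAt_nonpos (hG M p b hright) (fun x hx ↦
      mul_nonpos_of_nonneg_of_nonpos (by linarith [hx.1])
        (sub_nonpos.2 (hM x (hright (Ioo_subset_Icc_self hx))))) hpr hbr hpb
  have h₃ : G M a ≤ G M p :=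
    monotoneOn_Icc_of_hasDerivWithinAt_nonneg_s13 (hG M a p hleft) (fun x hx ↦
      mul_nonneg_of_nonpos_of_nonpos (by linarith [hx.2])
        (sub_nonpos.2 (hM x (hleft (Ioo_subset_Icc_self hx))))) hal hpl hap
  have h₄ : G m p ≤ G m b :=
    monotoneOn_Icc_of_hasDerivWithinAt_nonneg_s13 (hG m p b hright) (fun x hx ↦
      mul_nonneg (by linarith [hx.1])
        (sub_nonneg.2 (hm x (hright (Ioo_subset_Icc_self hx))))) hpr hbr hpb
  simp only [G, p] at h₁ h₂ h₃ h₄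
  rw [abs_le]
  constructor <;> linarith

end TrapezoidDerivative

theorem heat_time_derivative_approximation_general
    (I : Set ℝ) (T : ℝ)
    (u ut utt uxx : ℝ → ℝ → ℝ) (m2 M2 : ℝ)
    -- first and second partial derivatives of `u` in time, on `I × [0,T]`
    (hut : ∀ x ∈ I, ∀ t ∈ Icc 0 T, HasDerivWithinAt (fun s => u x s) (ut x t) (Icc 0 T) t)
    (hutt : ∀ x ∈ I, ∀ t ∈ Icc 0 T, HasDerivWithinAt (fun s => ut x s) (utt x t) (Icc 0 T) t)
    -- the heat equation
    (hheat : ∀ x ∈ I, ∀ t ∈ Icc 0 T, ut x t = uxx x t)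
    -- bounds on the second time derivative
    (hm2 : ∀ x ∈ I, ∀ t ∈ Icc 0 T, m2 ≤ utt x t)
    (hM2 : ∀ x ∈ I, ∀ t ∈ Icc 0 T, utt x t ≤ M2) :
    ∀ x ∈ I, ∀ k : ℝ, 0 < k → ∀ t : ℝ, 0 ≤ t → t + k ≤ T →
      |ut x t - (2 / k) * (u x (t + k) - u x t) + uxx x (t + k)|
        ≤ (k / 4) * (M2 - m2) := by
  intro x hx k hk t ht htk
  have hle : t ≤ t + k := by linarith
  have hsub : Icc t (t + k) ⊆ Icc 0 T := Icc_subset_Icc ht htk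
  have herror := abs_trapezoid_deriv_error_le hle
    (fun s hs ↦ (hut x hx s (hsub hs)).mono hsub) (fun s hs ↦ (hutt x hx s (hsub hs)).mono hsub)
    (fun s hs ↦ hm2 x hx s (hsub hs)) (fun s hs ↦ hM2 x hx s (hsub hs))
  rw [add_sub_cancel_left] at herror
  have hexpr : ut x t - (2 / k) * (u x (t + k) - u x t) + ut x (t + k) =
      2 / k * (k / 2 * (ut x t + ut x (t + k)) - (u x (t + k) - u x t)) := by
    field_simp
    ring
  rw [← hheat x hx (t + k) (hsub (right_mem_Icc.2 hle)), hexpr, abs_mul,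
    abs_of_pos (by positivity : 0 < 2 / k)]
  calc 2 / k * |k / 2 * (ut x t + ut x (t + k)) - (u x (t + k) - u x t)|
      ≤ 2 / k * ((M2 - m2) * k ^ 2 / 8) := by gcongr
    _ = k / 4 * (M2 - m2) := by field_simp; ring

/-- Time-derivative approximation obtained from the trapezoid-type Taylor-like formula:
if `u` solves the heat equation `∂u/∂t = ∂²u/∂x²` on `I × [0,T]`, is `C²` in time with
`m₂ ≤ ∂²u/∂t² ≤ M₂`, then for every `x ∈ I`, `k > 0` and `t` with `t + k ≤ T`,
`|∂u/∂t(x,t) - (2/k)(u(x,t+k) - u(x,t)) + ∂²u/∂x²(x,t+k)| ≤ (k/4)(M₂ - m₂)`. -/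
theorem heat_time_derivative_approximation
    (I : Set ℝ) (hI : IsOpen I) (T : ℝ) (hT : 0 < T)
    (u ut utt ux uxx : ℝ → ℝ → ℝ) (m2 M2 : ℝ)
    -- first and second partial derivatives of `u` in time, on `I × [0,T]`
    (hut : ∀ x ∈ I, ∀ t ∈ Icc 0 T, HasDerivWithinAt (fun s => u x s) (ut x t) (Icc 0 T) t)
    (hutt : ∀ x ∈ I, ∀ t ∈ Icc 0 T, HasDerivWithinAt (fun s => ut x s) (utt x t) (Icc 0 T) t)
    (huttcont : ∀ x ∈ I, ContinuousOn (fun s => utt x s) (Icc 0 T))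
    -- first and second partial derivatives of `u` in space, on `I × [0,T]`
    (hux : ∀ x ∈ I, ∀ t ∈ Icc 0 T, HasDerivAt (fun y => u y t) (ux x t) x)
    (huxx : ∀ x ∈ I, ∀ t ∈ Icc 0 T, HasDerivAt (fun y => ux y t) (uxx x t) x)
    -- the heat equation
    (hheat : ∀ x ∈ I, ∀ t ∈ Icc 0 T, ut x t = uxx x t)
    -- bounds on the second time derivative
    (hm2 : ∀ x ∈ I, ∀ t ∈ Icc 0 T, m2 ≤ utt x t)
    (hM2 : ∀ x ∈ I, ∀ t ∈ Icc 0 T, utt x t ≤ M2) :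
    ∀ x ∈ I, ∀ k : ℝ, 0 < k → ∀ t : ℝ, 0 ≤ t → t + k ≤ T →
      |ut x t - (2 / k) * (u x (t + k) - u x t) + uxx x (t + k)|
        ≤ (k / 4) * (M2 - m2) :=
  heat_time_derivative_approximation_general I T u ut utt uxx m2 M2 hut hutt hheat hm2 hM2
end

section
/- Let I ⊆ ℝ be open, T > 0, and let u : I × [0,T] → ℝ satisfy the heat equation ∂u/∂t = ∂²u/∂x² on I × [0,T]. Assume u is C² in time with m₂ ≤ ∂²u/∂t² ≤ M₂ on I × [0,T], and C⁴ in space with |∂⁴u/∂x⁴(x,t)| ≤ M₄ on I × [0,T]. Then for all h > 0, k > 0, x with [x-h, x+h] ⊆ I, and t with t + k ≤ T: | (u(x,t+k) - u(x,t))/k - (1/(2h²))·[ (u(x-h,t+k) - 2u(x,t+k) + u(x+h,t+k)) + (u(x-h,t) - 2u(x,t) + u(x+h,t)) ] | ≤ (k/8)·(M₂ - m₂) + (h²/12)·M₄. -/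
/-!
By the heat equation both sides of the scheme approximate the average of `∂u/∂t = ∂²u/∂x²`
over the two time levels, so the error splits into a space part and a time part. In space, Taylor expansion to order three about `x` in both directions makes the odd
terms cancel, so the centred second difference differs from `h² ∂²u/∂x²` by at most
`2 · M₄ h⁴/24`. In time, `(u(t+k) - u(t))/k` is compared with the trapezoidal average of `∂u/∂t`;
the trapezoidal rule is exact on quadratics, so after subtracting `c s²/2` with `c = (m₂+M₂)/2`
the second derivative oscillates by at most `(M₂-m₂)/2`, and first-order expansions from both
endpoints to the midpoint give the error `(M₂-m₂) k²/8`.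
-/

open Set
open scoped Nat

/-- The Taylor polynomial of order `n` at `a`, with `f i` in the role of the `i`-th derivative
of `f 0`, so that derivatives within a set can be supplied. -/
noncomputable def taylorPoly (f : ℕ → ℝ → ℝ) (n : ℕ) (a x : ℝ) : ℝ :=
  ∑ i ∈ Finset.range (n + 1), (x - a) ^ i / i ! * f i a

theorem hasDerivAt_taylorPoly_succ (f : ℕ → ℝ → ℝ) (n : ℕ) (a x : ℝ) :
    HasDerivAt (taylorPoly f (n + 1) a) (taylorPoly (fun i => f (i + 1)) n a x) x := by
  have hterm (i : ℕ) : HasDerivAt (fun y => (y - a) ^ (i + 1) / (i + 1)! * f (i + 1) a)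
      ((x - a) ^ i / i ! * f (i + 1) a) x := by
    refine ((((hasDerivAt_id' x).sub_const a).pow (i + 1)).div_const _).mul_const _
      |>.congr_deriv ?_
    rw [Nat.factorial_succ]
    push_cast
    field_simp
  have hpoly : taylorPoly f (n + 1) a =
      fun y => f 0 a + ∑ i ∈ Finset.range (n + 1), (y - a) ^ (i + 1) / (i + 1)! * f (i + 1) a := by
    ext y
    rw [taylorPoly, Finset.sum_range_succ']
    simp [add_comm]
  rw [hpoly]
  exact (HasDerivAt.fun_sum fun i _ => hterm i).const_add (f 0 a)

@[simp]
theorem taylorPoly_self (f : ℕ → ℝ → ℝ) (n : ℕ) (a : ℝ) : taylorPoly f n a a = f 0 a := by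
  simp [taylorPoly, Finset.sum_range_succ']

theorem abs_sub_taylorPoly_le_of_le {a b C : ℝ} (n : ℕ) {f : ℕ → ℝ → ℝ}
    (hf : ∀ i ≤ n, ∀ y ∈ Icc a b, HasDerivWithinAt (f i) (f (i + 1) y) (Icc a b) y)
    (hC : ∀ y ∈ Icc a b, |f (n + 1) y| ≤ C) :
    ∀ x ∈ Icc a b, |f 0 x - taylorPoly f n a x| ≤ C * (x - a) ^ (n + 1) / (n + 1)! := by
  induction n generalizing f with
  | zero =>
    intro x hx
    simpa [taylorPoly] using norm_image_sub_le_of_norm_deriv_le_segment' (hf 0 le_rfl)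
      (fun y hy => hC y (mem_Icc_of_Ico hy)) x hx
  | succ n ih =>
    -- The remainder of `f` differentiates to the remainder of the shifted chain.
    have hR' := ih (f := fun i => f (i + 1)) (fun i hi => hf (i + 1) (by omega)) hC
    have hR (y) (hy : y ∈ Icc a b) : HasDerivWithinAt (fun y => f 0 y - taylorPoly f (n + 1) a y)
        (f 1 y - taylorPoly (fun i => f (i + 1)) n a y) (Icc a b) y :=
      (hf 0 (by omega) y hy).sub (hasDerivAt_taylorPoly_succ f n a y).hasDerivWithinAt
    have hB (y : ℝ) : HasDerivAt (fun y => C * (y - a) ^ (n + 2) / (n + 2)!)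
        (C * (y - a) ^ (n + 1) / (n + 1)!) y := by
      refine ((((hasDerivAt_id' y).sub_const a).pow (n + 2)).const_mul C).div_const _
        |>.congr_deriv ?_
      rw [Nat.factorial_succ (n + 1)]
      push_cast
      field_simp
      ring
    refine image_norm_le_of_norm_deriv_right_le_deriv_boundary
      (fun y hy => (hR y hy).continuousWithinAt)
      (fun y hy => (hR y (mem_Icc_of_Ico hy)).mono_of_mem_nhdsWithin (Icc_mem_nhdsGE_of_mem hy))
      (by simp) hB (fun y hy => hR' y (mem_Icc_of_Ico hy))

theorem taylorPoly_comp_neg (f : ℕ → ℝ → ℝ) (n : ℕ) (a x : ℝ) :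
    taylorPoly (fun i y => (-1) ^ i * f i (-y)) n (-a) (-x) = taylorPoly f n a x := by
  refine Finset.sum_congr rfl fun i _ => ?_
  simp only [neg_neg]
  rw [← mul_assoc, div_mul_eq_mul_div, ← mul_pow]
  ring_nf

theorem abs_sub_taylorPoly_le {a b C : ℝ} (n : ℕ) {f : ℕ → ℝ → ℝ}
    (hf : ∀ i ≤ n, ∀ y ∈ uIcc a b, HasDerivWithinAt (f i) (f (i + 1) y) (uIcc a b) y)
    (hC : ∀ y ∈ uIcc a b, |f (n + 1) y| ≤ C) :
    |f 0 b - taylorPoly f n a b| ≤ C * |b - a| ^ (n + 1) / (n + 1)! := by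
  rcases le_total a b with hab | hba
  · rw [uIcc_of_le hab] at hf hC
    rw [abs_of_nonneg (sub_nonneg.2 hab)]
    exact abs_sub_taylorPoly_le_of_le n hf hC b (right_mem_Icc.2 hab)
  · -- Reflect through `y ↦ -y`, which multiplies the `i`-th derivative by `(-1) ^ i`.
    rw [uIcc_of_ge hba] at hf hC
    rw [abs_of_nonpos (sub_nonpos.2 hba), ← taylorPoly_comp_neg]
    have hneg : MapsTo (fun y : ℝ => -y) (Icc (-a) (-b)) (Icc b a) := fun y hy =>
      ⟨le_neg_of_le_neg hy.2, neg_le_of_neg_le hy.1⟩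
    have hg (i) (hi : i ≤ n) (y) (hy : y ∈ Icc (-a) (-b)) :
        HasDerivWithinAt (fun y => (-1) ^ i * f i (-y)) ((-1) ^ (i + 1) * f (i + 1) (-y))
          (Icc (-a) (-b)) y := by
      have := ((hf i hi (-y) (hneg hy)).scomp y (hasDerivWithinAt_neg y _) hneg).const_mul
        ((-1 : ℝ) ^ i)
      exact this.congr_deriv (by simp [pow_succ])
    have := abs_sub_taylorPoly_le_of_le n hg
      (fun y hy => by simpa [abs_mul] using hC (-y) (hneg hy)) (-b)
      (right_mem_Icc.2 (neg_le_neg hba))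
    simpa [neg_add_eq_sub] using this

theorem abs_centralSecondDiff_sub_le {f f₁ f₂ f₃ f₄ : ℝ → ℝ} {x h C : ℝ} (hh : 0 ≤ h)
    (hf : ∀ y ∈ Icc (x - h) (x + h), HasDerivAt f (f₁ y) y)
    (hf₁ : ∀ y ∈ Icc (x - h) (x + h), HasDerivAt f₁ (f₂ y) y)
    (hf₂ : ∀ y ∈ Icc (x - h) (x + h), HasDerivAt f₂ (f₃ y) y)
    (hf₃ : ∀ y ∈ Icc (x - h) (x + h), HasDerivAt f₃ (f₄ y) y)
    (hC : ∀ y ∈ Icc (x - h) (x + h), |f₄ y| ≤ C) :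
    |f (x - h) - 2 * f x + f (x + h) - h ^ 2 * f₂ x| ≤ C * h ^ 4 / 12 := by
  set F : ℕ → ℝ → ℝ := fun i => [f, f₁, f₂, f₃, f₄].getD i 0
  have hTaylor (c : ℝ) (hc : c ∈ Icc (x - h) (x + h)) :
      |f c - (f x + (c - x) * f₁ x + (c - x) ^ 2 / 2 * f₂ x + (c - x) ^ 3 / 6 * f₃ x)|
        ≤ C * |c - x| ^ 4 / 24 := by
    have hsub : uIcc x c ⊆ Icc (x - h) (x + h) := uIcc_subset_Icc ⟨by linarith, by linarith⟩ hc
    have hF : ∀ i ≤ 3, ∀ y ∈ uIcc x c, HasDerivWithinAt (F i) (F (i + 1) y) (uIcc x c) y := by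
      intro i hi y hy
      interval_cases i
      exacts [(hf y (hsub hy)).hasDerivWithinAt, (hf₁ y (hsub hy)).hasDerivWithinAt,
        (hf₂ y (hsub hy)).hasDerivWithinAt, (hf₃ y (hsub hy)).hasDerivWithinAt]
    simpa [F, taylorPoly, Finset.sum_range_succ, Nat.factorial] using
      abs_sub_taylorPoly_le 3 hF (fun y hy => hC y (hsub hy))
  have hplus := hTaylor (x + h) ⟨by linarith, le_rfl⟩
  have hminus := hTaylor (x - h) ⟨le_rfl, by linarith⟩
  simp only [add_sub_cancel_left, sub_sub_cancel_left, abs_neg, abs_of_nonneg hh] at hplus hminus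
  rw [abs_le] at hplus hminus ⊢
  constructor <;> linarith

theorem abs_trapezoid_sub_le {g g' g'' : ℝ → ℝ} {a b m M : ℝ} (hab : a ≤ b)
    (hg : ∀ s ∈ Icc a b, HasDerivWithinAt g (g' s) (Icc a b) s)
    (hg' : ∀ s ∈ Icc a b, HasDerivWithinAt g' (g'' s) (Icc a b) s)
    (hm : ∀ s ∈ Icc a b, m ≤ g'' s) (hM : ∀ s ∈ Icc a b, g'' s ≤ M) :
    |g b - g a - (b - a) / 2 * (g' a + g' b)| ≤ (M - m) * (b - a) ^ 2 / 8 := by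
  set c := (m + M) / 2 with hc
  set F : ℕ → ℝ → ℝ := fun i =>
    [fun s => g s - c * s ^ 2 / 2, fun s => g' s - c * s, fun s => g'' s - c].getD i 0
  have hTaylor (e : ℝ) (he : e ∈ Icc a b) :
      |F 0 ((a + b) / 2) - (F 0 e + ((a + b) / 2 - e) * F 1 e)|
        ≤ (M - m) / 2 * |(a + b) / 2 - e| ^ 2 / 2 := by
    have hsub : uIcc e ((a + b) / 2) ⊆ Icc a b :=
      uIcc_subset_Icc he ⟨by linarith, by linarith⟩
    have hF : ∀ i ≤ 1, ∀ s ∈ uIcc e ((a + b) / 2),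
        HasDerivWithinAt (F i) (F (i + 1) s) (uIcc e ((a + b) / 2)) s := by
      intro i hi s hs
      interval_cases i
      · exact ((hg s (hsub hs)).mono hsub).sub
          ((((hasDerivAt_pow 2 s).const_mul c).div_const 2).hasDerivWithinAt.congr_deriv
            (by ring))
      · exact ((hg' s (hsub hs)).mono hsub).sub
          (((hasDerivAt_id' s).const_mul c).hasDerivWithinAt.congr_deriv (mul_one c))
    have hC (s) (hs : s ∈ uIcc e ((a + b) / 2)) : |F 2 s| ≤ (M - m) / 2 := by
      have := hm s (hsub hs)
      have := hM s (hsub hs)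
      show |g'' s - c| ≤ _
      rw [abs_le]
      constructor <;> linarith [hc]
    simpa [taylorPoly, Finset.sum_range_succ] using abs_sub_taylorPoly_le 1 hF hC
  have hleft := hTaylor a (left_mem_Icc.2 hab)
  have hright := hTaylor b (right_mem_Icc.2 hab)
  simp only [F, List.getD_cons_zero, List.getD_cons_succ, sq_abs] at hleft hright
  rw [abs_le] at hleft hright ⊢
  constructor <;> linarith

theorem abs_crankNicolson_residual_le {D S₀ S₁ d₀ d₁ k h εt εx : ℝ} (hk : 0 < k) (hh : 0 < h)
    (hD : |D - k / 2 * (d₀ + d₁)| ≤ εt) (hS₀ : |S₀ - h ^ 2 * d₀| ≤ εx)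
    (hS₁ : |S₁ - h ^ 2 * d₁| ≤ εx) :
    |D / k - 1 / (2 * h ^ 2) * (S₁ + S₀)| ≤ εt / k + εx / h ^ 2 := by
  have hsplit : D / k - 1 / (2 * h ^ 2) * (S₁ + S₀) = (D - k / 2 * (d₀ + d₁)) / k
      - ((S₀ - h ^ 2 * d₀) + (S₁ - h ^ 2 * d₁)) / (2 * h ^ 2) := by
    field_simp
    ring
  have hh2 : 0 < 2 * h ^ 2 := by positivity
  calc |D / k - 1 / (2 * h ^ 2) * (S₁ + S₀)|
      ≤ |D - k / 2 * (d₀ + d₁)| / k + (|S₀ - h ^ 2 * d₀| + |S₁ - h ^ 2 * d₁|) / (2 * h ^ 2) := by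
        rw [hsplit]
        refine (abs_sub _ _).trans (add_le_add ?_ ?_)
        · rw [abs_div, abs_of_pos hk]
        · rw [abs_div, abs_of_pos hh2]
          gcongr
          exact abs_add_le _ _
    _ ≤ εt / k + (εx + εx) / (2 * h ^ 2) := by gcongr
    _ = εt / k + εx / h ^ 2 := by field_simp; ring

theorem heat_FD2_truncation_error_general
    (I : Set ℝ) (T : ℝ)
    (u ut utt ux1 ux2 ux3 ux4 : ℝ → ℝ → ℝ) (m2 M2 M4 : ℝ)
    -- first and second partial derivatives of `u` in time, on `I × [0,T]`
    (hut : ∀ x ∈ I, ∀ t ∈ Icc 0 T, HasDerivWithinAt (fun s => u x s) (ut x t) (Icc 0 T) t)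
    (hutt : ∀ x ∈ I, ∀ t ∈ Icc 0 T, HasDerivWithinAt (fun s => ut x s) (utt x t) (Icc 0 T) t)
    -- partial derivatives of `u` in space up to order four, on `I × [0,T]`
    (hux1 : ∀ x ∈ I, ∀ t ∈ Icc 0 T, HasDerivAt (fun y => u y t) (ux1 x t) x)
    (hux2 : ∀ x ∈ I, ∀ t ∈ Icc 0 T, HasDerivAt (fun y => ux1 y t) (ux2 x t) x)
    (hux3 : ∀ x ∈ I, ∀ t ∈ Icc 0 T, HasDerivAt (fun y => ux2 y t) (ux3 x t) x)
    (hux4 : ∀ x ∈ I, ∀ t ∈ Icc 0 T, HasDerivAt (fun y => ux3 y t) (ux4 x t) x)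
    -- the heat equation
    (hheat : ∀ x ∈ I, ∀ t ∈ Icc 0 T, ut x t = ux2 x t)
    -- bounds on the second time derivative and the fourth space derivative
    (hm2 : ∀ x ∈ I, ∀ t ∈ Icc 0 T, m2 ≤ utt x t)
    (hM2 : ∀ x ∈ I, ∀ t ∈ Icc 0 T, utt x t ≤ M2)
    (hM4 : ∀ x ∈ I, ∀ t ∈ Icc 0 T, |ux4 x t| ≤ M4) :
    ∀ h k : ℝ, 0 < h → 0 < k → ∀ x : ℝ, Icc (x - h) (x + h) ⊆ I →
      ∀ t : ℝ, 0 ≤ t → t + k ≤ T →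
        |(u x (t + k) - u x t) / k
            - (1 / (2 * h ^ 2)) *
                ((u (x - h) (t + k) - 2 * u x (t + k) + u (x + h) (t + k))
                  + (u (x - h) t - 2 * u x t + u (x + h) t))|
          ≤ (k / 8) * (M2 - m2) + (h ^ 2 / 12) * M4 := by
  intro h k hh hk x hx t ht0 htk
  have hxI : x ∈ I := hx ⟨by linarith, by linarith⟩
  have hIcc : Icc t (t + k) ⊆ Icc 0 T := Icc_subset_Icc ht0 htk
  have ht : t ∈ Icc 0 T := hIcc (left_mem_Icc.2 (by linarith))
  have htk' : t + k ∈ Icc 0 T := hIcc (right_mem_Icc.2 (by linarith))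
  have htime := abs_trapezoid_sub_le (by linarith)
    (fun s hs => (hut x hxI s (hIcc hs)).mono hIcc) (fun s hs => (hutt x hxI s (hIcc hs)).mono hIcc)
    (fun s hs => hm2 x hxI s (hIcc hs)) (fun s hs => hM2 x hxI s (hIcc hs))
  rw [hheat x hxI t ht, hheat x hxI (t + k) htk', add_sub_cancel_left] at htime
  have hspace (τ) (hτ : τ ∈ Icc 0 T) := abs_centralSecondDiff_sub_le hh.le
    (fun y hy => hux1 y (hx hy) τ hτ) (fun y hy => hux2 y (hx hy) τ hτ)
    (fun y hy => hux3 y (hx hy) τ hτ) (fun y hy => hux4 y (hx hy) τ hτ)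
    (fun y hy => hM4 y (hx hy) τ hτ)
  convert abs_crankNicolson_residual_le hk hh htime (hspace t ht) (hspace (t + k) htk') using 1
  field_simp

/-- Local truncation error of the implicit finite differences scheme (FD₂) for the heat
equation: if `u` solves `∂u/∂t = ∂²u/∂x²` on `I × [0,T]`, is `C²` in time with
`m₂ ≤ ∂²u/∂t² ≤ M₂` and `C⁴` in space with `|∂⁴u/∂x⁴| ≤ M₄`, then for all `h, k > 0`,
`x` with `[x-h, x+h] ⊆ I` and `t` with `t + k ≤ T`,
`|(u(x,t+k)-u(x,t))/k - (1/(2h²))·[δ²u(·,t+k) + δ²u(·,t)](x)| ≤ (k/8)(M₂-m₂) + (h²/12)M₄`,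
where `δ²v(x) = v(x-h) - 2v(x) + v(x+h)`. -/
theorem heat_FD2_truncation_error
    (I : Set ℝ) (hI : IsOpen I) (T : ℝ) (hT : 0 < T)
    (u ut utt ux1 ux2 ux3 ux4 : ℝ → ℝ → ℝ) (m2 M2 M4 : ℝ)
    -- first and second partial derivatives of `u` in time, on `I × [0,T]`
    (hut : ∀ x ∈ I, ∀ t ∈ Icc 0 T, HasDerivWithinAt (fun s => u x s) (ut x t) (Icc 0 T) t)
    (hutt : ∀ x ∈ I, ∀ t ∈ Icc 0 T, HasDerivWithinAt (fun s => ut x s) (utt x t) (Icc 0 T) t)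
    (huttcont : ∀ x ∈ I, ContinuousOn (fun s => utt x s) (Icc 0 T))
    -- partial derivatives of `u` in space up to order four, on `I × [0,T]`
    (hux1 : ∀ x ∈ I, ∀ t ∈ Icc 0 T, HasDerivAt (fun y => u y t) (ux1 x t) x)
    (hux2 : ∀ x ∈ I, ∀ t ∈ Icc 0 T, HasDerivAt (fun y => ux1 y t) (ux2 x t) x)
    (hux3 : ∀ x ∈ I, ∀ t ∈ Icc 0 T, HasDerivAt (fun y => ux2 y t) (ux3 x t) x)
    (hux4 : ∀ x ∈ I, ∀ t ∈ Icc 0 T, HasDerivAt (fun y => ux3 y t) (ux4 x t) x)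
    (hux4cont : ∀ t ∈ Icc (0 : ℝ) T, ContinuousOn (fun y => ux4 y t) I)
    -- the heat equation
    (hheat : ∀ x ∈ I, ∀ t ∈ Icc 0 T, ut x t = ux2 x t)
    -- bounds on the second time derivative and the fourth space derivative
    (hm2 : ∀ x ∈ I, ∀ t ∈ Icc 0 T, m2 ≤ utt x t)
    (hM2 : ∀ x ∈ I, ∀ t ∈ Icc 0 T, utt x t ≤ M2)
    (hM4 : ∀ x ∈ I, ∀ t ∈ Icc 0 T, |ux4 x t| ≤ M4) :
    ∀ h k : ℝ, 0 < h → 0 < k → ∀ x : ℝ, Icc (x - h) (x + h) ⊆ I →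
      ∀ t : ℝ, 0 ≤ t → t + k ≤ T →
        |(u x (t + k) - u x t) / k
            - (1 / (2 * h ^ 2)) *
                ((u (x - h) (t + k) - 2 * u x (t + k) + u (x + h) (t + k))
                  + (u (x - h) t - 2 * u x t + u (x + h) t))|
          ≤ (k / 8) * (M2 - m2) + (h ^ 2 / 12) * M4 :=
  heat_FD2_truncation_error_general I T u ut utt ux1 ux2 ux3 ux4 m2 M2 M4 hut hutt hux1 hux2 hux3
    hux4 hheat hm2 hM2 hM4
end
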